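/- In the SCP dynamic-programming setting, suppose index j+1 exists and blk(j+1) = blk(j) + 1 (i.e., S_{j+1} is the first set of its block and a previous block exists). Then for every W ⊆ α: OPT(W, j+1, 0) = min( 2 + OPT(W \ S_{j+1}, j, flag(blk(j))), OPT(W, j, flag(blk(j))) ), where arithmetic is in ℕ ∪ {∞} with 2 + ∞ = ∞. -/

import Mathlib

/-!
A solution `X` for `OPT(W, j+1, 0)` either avoids `j + 1`, and is then exactly a solution for
`OPT(W, j, flag(blk j))`, or is `insert (j+1) Y` with `Y` a solution for
`OPT(W \ S_{j+1}, j, flag(blk j))`. The new block `blk(j+1)` carries flag `0`, so it imposes no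
constraint and no penalty, and it lies above every block `≤ blk j`, so adding `j + 1` to `Y`
changes neither the blocks it meets nor the blocks it misses: the cost goes up by exactly `2`.
-/

/-- `OPT S blk flag W j b` in the SCP dynamic-programming setting: the infimum, over all
index sets `X ⊆ {i : i ≤ j}` covering `W` and meeting every block `β_x` (`x ≤ blk j`)
whose (updated) flag is `2`, of `2|X|` plus the number of blocks `β_x` (`x ≤ blk j`)
with (updated) flag `1` that `X` misses; here the flag of block `blk j` is overridden
to be `b`.  The value is `∞` if no such `X` exists. -/
noncomputable def OPT {α : Type*} [DecidableEq α] {m q : ℕ}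
    (S : Fin m → Finset α) (blk : Fin m → Fin q) (flag : Fin q → ℕ)
    (W : Finset α) (j : Fin m) (b : ℕ) : ℕ∞ :=
  sInf { n : ℕ∞ | ∃ X : Finset (Fin m),
    (∀ i ∈ X, i ≤ j) ∧
    (W ⊆ X.biUnion S) ∧
    (∀ x : Fin q, x ≤ blk j → Function.update flag (blk j) b x = 2 →
      ∃ i ∈ X, blk i = x) ∧
    n = 2 * (X.card : ℕ∞) +
      ((Finset.univ.filter (fun x : Fin q =>
        x ≤ blk j ∧ Function.update flag (blk j) b x = 1 ∧
          ∀ i ∈ X, blk i ≠ x)).card : ℕ∞) }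

open Finset Function

theorem le_and_update_zero_eq_iff {β M : Type*} [LinearOrder β] [DecidableEq β] [Zero M]
    {t t' : β} (ht : t ⋖ t') (f : β → M) {k : M} (hk : k ≠ 0) (x : β) :
    x ≤ t' ∧ update f t' 0 x = k ↔ x ≤ t ∧ f x = k := by
  rcases eq_or_ne x t' with rfl | hx
  · simp [hk.symm, ht.lt.not_ge]
  · rw [update_of_ne hx]
    exact and_congr_left' ⟨fun h => ht.le_of_lt (h.lt_of_ne hx), fun h => h.trans ht.le⟩

namespace SCP

variable {α : Type*} [DecidableEq α] {m q : ℕ} (S : Fin m → Finset α) (blk : Fin m → Fin q)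

/-- `t` and `f` play the roles of `blk j` and of the updated flags in `OPT`; they are kept
independent of `j` so that solutions for different `j` can be compared. -/
def IsFeasible (f : Fin q → ℕ) (t : Fin q) (W : Finset α) (j : Fin m) (X : Finset (Fin m)) :
    Prop :=
  (∀ i ∈ X, i ≤ j) ∧ W ⊆ X.biUnion S ∧ ∀ x ≤ t, f x = 2 → ∃ i ∈ X, blk i = x

def missedBlocks (f : Fin q → ℕ) (t : Fin q) (X : Finset (Fin m)) : Finset (Fin q) :=
  univ.filter fun x => x ≤ t ∧ f x = 1 ∧ ∀ i ∈ X, blk i ≠ x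

def cost (f : Fin q → ℕ) (t : Fin q) (X : Finset (Fin m)) : ℕ∞ :=
  2 * (X.card : ℕ∞) + ((missedBlocks blk f t X).card : ℕ∞)

theorem OPT_eq_iInf (flag : Fin q → ℕ) (W : Finset α) (j : Fin m) (b : ℕ) :
    OPT S blk flag W j b =
      ⨅ (X) (_ : IsFeasible S blk (update flag (blk j) b) (blk j) W j X),
        cost blk (update flag (blk j) b) (blk j) X :=
  le_antisymm (le_iInf₂ fun X hX => sInf_le ⟨X, hX.1, hX.2.1, hX.2.2, rfl⟩)
    (le_sInf fun _ ⟨X, h₁, h₂, h₃, hn⟩ => hn ▸ iInf₂_le X ⟨h₁, h₂, h₃⟩)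

variable {f : Fin q → ℕ} {t t' : Fin q} {W : Finset α} {i j j' : Fin m} {X : Finset (Fin m)}

theorem missedBlocks_update_zero (ht : t ⋖ t') :
    missedBlocks blk (update f t' 0) t' X = missedBlocks blk f t X := by
  ext x
  simp only [missedBlocks, mem_filter, mem_univ, true_and, ← and_assoc,
    le_and_update_zero_eq_iff ht f one_ne_zero]

theorem cost_update_zero (ht : t ⋖ t') : cost blk (update f t' 0) t' X = cost blk f t X := by
  rw [cost, cost, missedBlocks_update_zero blk ht]

theorem missedBlocks_insert_of_lt (h : t < blk i) :
    missedBlocks blk f t (insert i X) = missedBlocks blk f t X := by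
  ext x
  simp only [missedBlocks, mem_filter, mem_univ, true_and, forall_mem_insert]
  exact ⟨fun ⟨hx, hf, _, hX⟩ => ⟨hx, hf, hX⟩,
    fun ⟨hx, hf, hX⟩ => ⟨hx, hf, (hx.trans_lt h).ne', hX⟩⟩

theorem cost_insert_of_lt (hi : i ∉ X) (h : t < blk i) :
    cost blk f t (insert i X) = 2 + cost blk f t X := by
  rw [cost, cost, missedBlocks_insert_of_lt blk h, card_insert_of_notMem hi]
  push_cast
  ring

theorem isFeasible_update_zero_iff (ht : t ⋖ t') :
    IsFeasible S blk (update f t' 0) t' W j X ↔ IsFeasible S blk f t W j X := by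
  simp only [IsFeasible, ← and_imp, le_and_update_zero_eq_iff ht f two_ne_zero]

theorem isFeasible_insert_iff (h : t < blk i) :
    IsFeasible S blk f t W j (insert i X) ↔ i ≤ j ∧ IsFeasible S blk f t (W \ S i) j X := by
  simp only [IsFeasible, forall_mem_insert, biUnion_insert, exists_mem_insert, and_assoc]
  refine and_congr_right' (and_congr_right' (and_congr sdiff_le_iff.symm
    (forall₂_congr fun x hx => ?_)))
  simp [(hx.trans_lt h).ne']

theorem isFeasible_iff_of_covBy (hj : j ⋖ j') (hX : j' ∉ X) :
    IsFeasible S blk f t W j' X ↔ IsFeasible S blk f t W j X :=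
  and_congr_left' <| forall₂_congr fun _ hi =>
    ⟨fun h => hj.le_of_lt (h.lt_of_ne (ne_of_mem_of_not_mem hi hX)), fun h => h.trans hj.le⟩

theorem iInf_cost_eq_min (hj : j ⋖ j') (ht : t < blk j') :
    ⨅ (X) (_ : IsFeasible S blk f t W j' X), cost blk f t X =
      min (2 + ⨅ (Y) (_ : IsFeasible S blk f t (W \ S j') j Y), cost blk f t Y)
        (⨅ (X) (_ : IsFeasible S blk f t W j X), cost blk f t X) := by
  have notMem {W X} (hX : IsFeasible S blk f t W j X) : j' ∉ X :=
    fun h => (hX.1 j' h).not_gt hj.lt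
  apply le_antisymm
  · refine le_min ?_ (le_iInf₂ fun X hX => ?_)
    · rw [ENat.add_iInf₂]
      refine le_iInf₂ fun Y hY => ?_
      rw [← cost_insert_of_lt blk (notMem hY) ht]
      exact iInf₂_le _ ((isFeasible_insert_iff S blk ht).2
        ⟨le_rfl, (isFeasible_iff_of_covBy S blk hj (notMem hY)).2 hY⟩)
    · exact iInf₂_le X ((isFeasible_iff_of_covBy S blk hj (notMem hX)).2 hX)
  · refine le_iInf₂ fun X hX => ?_
    by_cases hjX : j' ∈ X
    · rw [← insert_erase hjX] at hX ⊢
      obtain ⟨-, hY⟩ := (isFeasible_insert_iff S blk ht).1 hX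
      rw [cost_insert_of_lt blk (notMem_erase j' X) ht]
      refine (min_le_left _ _).trans ?_
      gcongr
      exact iInf₂_le _ <| (isFeasible_iff_of_covBy S blk hj (notMem_erase j' X)).1 hY
    · exact (min_le_right _ _).trans (iInf₂_le X ((isFeasible_iff_of_covBy S blk hj hjX).1 hX))

end SCP

open SCP in
theorem scp_recurrence_new_block_flag_zero_general
    {α : Type*} [DecidableEq α] {m q : ℕ}
    (S : Fin m → Finset α) (blk : Fin m → Fin q)
    (flag : Fin q → ℕ)
    (j j' : Fin m) (hj' : (j' : ℕ) = (j : ℕ) + 1)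
    (hblk : (blk j' : ℕ) = (blk j : ℕ) + 1)
    (W : Finset α) :
    OPT S blk flag W j' 0 =
      min (2 + OPT S blk flag (W \ S j') j (flag (blk j)))
        (OPT S blk flag W j (flag (blk j))) := by
  have hj : j ⋖ j' := Fin.covBy_iff.2 (Nat.covBy_iff_add_one_eq.2 hj'.symm)
  have ht : blk j ⋖ blk j' := Fin.covBy_iff.2 (Nat.covBy_iff_add_one_eq.2 hblk.symm)
  simp only [OPT_eq_iInf, update_eq_self, isFeasible_update_zero_iff S blk ht,
    cost_update_zero blk ht]
  exact iInf_cost_eq_min S blk hj ht.lt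

/-- SCP recurrence when `S_{j+1}` is the first set of its block and a
previous block exists, for flag `b = 0`:
`OPT(W, j+1, 0) = min(2 + OPT(W \\ S_{j+1}, j, flag(blk j)), OPT(W, j, flag(blk j)))`. -/
theorem scp_recurrence_new_block_flag_zero
    {α : Type*} [DecidableEq α] {m q : ℕ} (hm : 0 < m) (hq : 0 < q)
    (S : Fin m → Finset α) (blk : Fin m → Fin q)
    (hmono : Monotone blk) (hsurj : Function.Surjective blk)
    (flag : Fin q → ℕ) (hflag : ∀ x, flag x ≤ 2)
    (j j' : Fin m) (hj' : (j' : ℕ) = (j : ℕ) + 1)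
    (hblk : (blk j' : ℕ) = (blk j : ℕ) + 1)
    (W : Finset α) :
    OPT S blk flag W j' 0 =
      min (2 + OPT S blk flag (W \ S j') j (flag (blk j)))
        (OPT S blk flag W j (flag (blk j))) :=
  scp_recurrence_new_block_flag_zero_general S blk flag j j' hj' hblk W
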